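/- arXiv:1807.09404 — 2 statements merged into one kernel-verified Lean document; each statement's English description precedes it below -/
import Mathlib

section
/- Let G be a graph of order n and H an induced subgraph of G of order k. Then th₊(G) ≤ n − k + th₊(H). -/
open SimpleGraph

/-- Reachability in `G` avoiding the blue set `B` (i.e., within a white component). -/
def offReach {V : Type*} (G : SimpleGraph V) (B : Set V) : V → V → Prop :=
  Relation.ReflTransGen (fun a b => G.Adj a b ∧ a ∉ B ∧ b ∉ B)

/-- The positive semidefinite color change rule: a blue vertex `v` forces a white vertex `w`
if `w` is the unique white neighbor of `v` in the white component of `w` (together with `B`). -/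
def psdForces {V : Type*} (G : SimpleGraph V) (B : Set V) (v w : V) : Prop :=
  v ∈ B ∧ w ∉ B ∧ G.Adj v w ∧
    ∀ u, u ∉ B → G.Adj v u → offReach G B u w → u = w

/-- One round of PSD forcing: perform all possible forces. -/
def psdStep {V : Type*} (G : SimpleGraph V) (B : Set V) : Set V :=
  B ∪ {w | ∃ v, psdForces G B v w}

/-- `S` is a positive semidefinite zero forcing set. -/
def IsPSDForcingSet {V : Type*} (G : SimpleGraph V) (S : Set V) : Prop :=
  ∃ t, (psdStep G)^[t] S = Set.univ

/-- The PSD propagation time of `S`. -/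
noncomputable def psdPt {V : Type*} (G : SimpleGraph V) (S : Set V) : ℕ :=
  sInf {t | (psdStep G)^[t] S = Set.univ}

/-- The PSD throttling number of `G`. -/
noncomputable def psdTh {V : Type*} (G : SimpleGraph V) [Fintype V] : ℕ :=
  sInf {k | ∃ S : Finset V, IsPSDForcingSet G ↑S ∧ k = S.card + psdPt G ↑S}

/-!
Colour blue every vertex outside `W` and, inside `W`, an optimal PSD forcing set `S` of the
induced subgraph `G[W]`. Every white vertex then lies in `W` and white components of `G` are
white components of `G[W]`, so each force of `G[W]` is still a force of `G`. Hence the enlarged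
set forces `G` within `pt₊(G[W]; S)` rounds, at the cost of `|V| - |W|` extra initial vertices.
-/

section Forcing

variable {V : Type*} (G : SimpleGraph V)

lemma offReach_of_subset {B B' : Set V} (h : B ⊆ B') {a b : V} (hab : offReach G B' a b) :
    offReach G B a b :=
  Relation.ReflTransGen.mono
    (fun _ _ ⟨hadj, ha, hb⟩ => ⟨hadj, fun h' => ha (h h'), fun h' => hb (h h')⟩) _ _ hab

lemma subset_psdStep (B : Set V) : B ⊆ psdStep G B :=
  Set.subset_union_left

lemma psdStep_monotone : Monotone (psdStep G) := by
  rintro B B' h x (hx | ⟨v, hv, hx, hvx, huniq⟩)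
  · exact Or.inl (h hx)
  · by_cases hx' : x ∈ B'
    · exact Or.inl hx'
    · exact Or.inr ⟨v, h hv, hx', hvx, fun u hu hvu hux =>
        huniq u (fun h' => hu (h h')) hvu (offReach_of_subset G h hux)⟩

lemma psdStep_iterate_psdPt {S : Set V} (hS : IsPSDForcingSet G S) :
    (psdStep G)^[psdPt G S] S = Set.univ :=
  Nat.sInf_mem hS

lemma psdTh_le [Fintype V] (S : Finset V) {t : ℕ} (ht : (psdStep G)^[t] ↑S = Set.univ) :
    psdTh G ≤ S.card + t :=
  calc psdTh G ≤ S.card + psdPt G ↑S := Nat.sInf_le ⟨S, ⟨t, ht⟩, rfl⟩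
    _ ≤ S.card + t := Nat.add_le_add_left (Nat.sInf_le ht) _

lemma exists_psdTh_eq [Fintype V] :
    ∃ S : Finset V, (psdStep G)^[psdPt G ↑S] ↑S = Set.univ ∧ psdTh G = S.card + psdPt G ↑S := by
  have hne : {k | ∃ S : Finset V, IsPSDForcingSet G ↑S ∧ k = S.card + psdPt G ↑S}.Nonempty :=
    ⟨_, Finset.univ, ⟨0, Finset.coe_univ⟩, rfl⟩
  obtain ⟨S, hS, hth⟩ := Nat.sInf_mem hne
  exact ⟨S, psdStep_iterate_psdPt G hS, hth⟩

end Forcing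

section Induced

variable {V : Type*} (G : SimpleGraph V) (W : Set V)

def extBlue (B : Set W) : Set V := Subtype.val '' B ∪ Wᶜ

variable {W}

lemma val_mem_extBlue {B : Set W} {a : W} : (a : V) ∈ extBlue W B ↔ a ∈ B := by
  refine ⟨?_, fun h => Or.inl ⟨a, h, rfl⟩⟩
  rintro (⟨b, hb, hba⟩ | h)
  · rwa [← Subtype.val_injective hba]
  · exact absurd a.2 h

lemma mem_of_not_mem_extBlue {B : Set W} {a : V} (h : a ∉ extBlue W B) : a ∈ W :=
  not_not.1 fun ha => h (Or.inr ha)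

lemma extBlue_univ : extBlue W Set.univ = Set.univ :=
  Set.eq_univ_of_forall fun x => by
    by_cases hx : x ∈ W
    · exact Or.inl ⟨⟨x, hx⟩, trivial, rfl⟩
    · exact Or.inr hx

lemma offReach_induce_of_offReach {B : Set W} {a b : V} (h : offReach G (extBlue W B) a b)
    (ha : a ∈ W) (hb : b ∈ W) : offReach (G.induce W) B ⟨a, ha⟩ ⟨b, hb⟩ := by
  induction h with
  | refl => exact .refl
  | tail _ step ih =>
    obtain ⟨hadj, hc, hd⟩ := step
    exact (ih (mem_of_not_mem_extBlue hc)).tail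
      ⟨hadj, fun h' => hc (val_mem_extBlue.2 h'), fun h' => hd (val_mem_extBlue.2 h')⟩

lemma psdForces_of_induce {B : Set W} {v w : W} (h : psdForces (G.induce W) B v w) :
    psdForces G (extBlue W B) v w := by
  obtain ⟨hv, hw, hvw, huniq⟩ := h
  refine ⟨val_mem_extBlue.2 hv, fun h' => hw (val_mem_extBlue.1 h'), hvw, fun u hu hvu huw => ?_⟩
  have huW := mem_of_not_mem_extBlue hu
  exact congrArg Subtype.val <| huniq ⟨u, huW⟩ (fun h' => hu (val_mem_extBlue.2 h')) hvu
    (offReach_induce_of_offReach G huw huW w.2)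

lemma extBlue_psdStep_subset (B : Set W) :
    extBlue W (psdStep (G.induce W) B) ⊆ psdStep G (extBlue W B) := by
  rintro x (⟨w, hw | ⟨v, hforce⟩, rfl⟩ | hx)
  · exact subset_psdStep G _ (val_mem_extBlue.2 hw)
  · exact Or.inr ⟨v, psdForces_of_induce G hforce⟩
  · exact subset_psdStep G _ (Or.inr hx)

lemma extBlue_psdStep_iterate_subset (B : Set W) (t : ℕ) :
    extBlue W ((psdStep (G.induce W))^[t] B) ⊆ (psdStep G)^[t] (extBlue W B) := by
  induction t with
  | zero => exact subset_rfl
  | succ n ih =>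
    rw [Function.iterate_succ_apply', Function.iterate_succ_apply']
    exact (extBlue_psdStep_subset G _).trans (psdStep_monotone G ih)

lemma psdStep_iterate_extBlue_eq_univ {B : Set W} {t : ℕ}
    (h : (psdStep (G.induce W))^[t] B = Set.univ) :
    (psdStep G)^[t] (extBlue W B) = Set.univ := by
  have := extBlue_psdStep_iterate_subset G B t
  rwa [h, extBlue_univ, Set.univ_subset_iff] at this

end Induced

theorem stmt_8 {V : Type*} [Fintype V] (G : SimpleGraph V)
    (W : Set V) [Fintype W] (k : ℕ) (hk : k = Fintype.card W) :
    psdTh G ≤ Fintype.card V - k + psdTh (G.induce W) := by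
  classical
  obtain ⟨S, hforce, hth⟩ := exists_psdTh_eq (G.induce W)
  set T : Finset V := S.image Subtype.val ∪ Wᶜ.toFinset
  have hT : (T : Set V) = extBlue W ↑S := by simp [T, extBlue]
  have hcard : T.card ≤ S.card + (Fintype.card V - k) :=
    calc T.card ≤ (S.image Subtype.val).card + Wᶜ.toFinset.card := Finset.card_union_le _ _
      _ = S.card + (Fintype.card V - k) := by
        rw [Finset.card_image_of_injective _ Subtype.val_injective, Set.toFinset_card,
          Fintype.card_compl_set, hk]
  calc psdTh G ≤ T.card + psdPt (G.induce W) ↑S :=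
        psdTh_le G T (hT ▸ psdStep_iterate_extBlue_eq_univ G hforce)
    _ ≤ Fintype.card V - k + psdTh (G.induce W) := by omega
end

section
/- If T is a full binary tree of height h (root of degree 2, all internal non-root vertices of degree 3, all leaves at distance exactly h from the root), then th₊(T) = h + 1. -/
open SimpleGraph

/-!
Rooting the tree at `r`, a blue vertex has at most one white neighbour in each white component
(two would close a cycle), so the PSD rule simply colours every white neighbour of a blue vertex.
Hence `{r}` colours the ball of radius `t` after `t` rounds and finishes after `h` rounds.
Conversely, after `t` rounds every blue vertex lies within distance `t` of `S`; as all degrees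
are at most `3`, such a ball has at most `3 * 2 ^ t - 2` vertices, and
`|S| (3 * 2 ^ t - 2) < 2 ^ (h + 1) - 1 = |V|` as soon as `|S| + t ≤ h`,
because `|S| ≤ 2 ^ (|S| - 1)`.
-/

open Finset

namespace SimpleGraph

variable {V : Type*} {G : SimpleGraph V} {u v w x : V}

lemma dist_le_dist_add_one_of_adj (hadj : G.Adj v w) : G.dist u w ≤ G.dist u v + 1 := by
  rcases hadj.diff_dist_adj (u := u) with h | h | h <;> omega

lemma exists_adj_dist_eq_of_dist_eq_add_one {d : ℕ} (h : G.dist u v = d + 1) :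
    ∃ w, G.Adj v w ∧ G.dist u w = d := by
  obtain ⟨p, hp⟩ := exists_walk_of_dist_ne_zero (G := G) (u := v) (v := u)
    (by rw [dist_comm]; omega)
  cases p with
  | nil => simp at h
  | cons hadj q =>
    refine ⟨_, hadj, le_antisymm ?_ ?_⟩
    · have := dist_le q
      rw [Walk.length_cons, dist_comm, h] at hp
      rw [dist_comm]
      omega
    · have := dist_le_dist_add_one_of_adj (u := u) hadj.symm
      omega

lemma dist_le_length_of_mem_support {p : G.Walk u v} (hx : x ∈ p.support) :
    G.dist u x ≤ p.length := by
  classical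
  exact (dist_le _).trans (p.length_takeUntil_le_length hx)

lemma IsAcyclic.eq_penultimate_of_adj_of_dist_lt (hG : G.IsAcyclic) {p : G.Walk u v}
    (hp : p.length = G.dist u v) (hadj : G.Adj v w) (hw : G.dist u w < G.dist u v) :
    w = p.penultimate := by
  obtain ⟨q, hq⟩ := (p.reachable.trans hadj.reachable).exists_walk_length_eq_dist
  have hv : v ∉ q.support := fun hv => by
    have := dist_le_length_of_mem_support hv
    omega
  have hp' := p.isPath_of_length_eq_dist hp
  exact hG.eq_penultimate_of_adj_end hp' hadj
    (hG.mem_support_of_ne_mem_support_of_adj_of_isPath hp' (q.isPath_of_length_eq_dist hq) hadj hv)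

lemma exists_walk_of_offReach {B : Set V} (h : offReach G B u w) (hu : u ∉ B) :
    ∃ p : G.Walk u w, ∀ x ∈ p.support, x ∉ B := by
  induction h with
  | refl => exact ⟨Walk.nil, by simpa⟩
  | tail _ hbc ih =>
    obtain ⟨p, hp⟩ := ih
    refine ⟨p.concat hbc.1, fun x hx => ?_⟩
    rw [Walk.support_concat, List.mem_append, List.mem_singleton] at hx
    rcases hx with hx | rfl
    exacts [hp x hx, hbc.2.2]

lemma IsAcyclic.psdForces_iff (hG : G.IsAcyclic) {B : Set V} :
    psdForces G B v w ↔ v ∈ B ∧ w ∉ B ∧ G.Adj v w := by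
  refine ⟨fun ⟨hv, hw, hadj, _⟩ => ⟨hv, hw, hadj⟩,
    fun ⟨hv, hw, hadj⟩ => ⟨hv, hw, hadj, fun x hx hvx hxw => ?_⟩⟩
  classical
  -- a white path from `x` to `w` avoids `v`; preceded by the edge `vx` it is a path from `v` to
  -- `w`, which in a forest must be the edge `vw`
  obtain ⟨p, hp⟩ := exists_walk_of_offReach hxw hx
  have hq : (Walk.cons hvx p.bypass).IsPath :=
    p.bypass_isPath.cons fun hv' => hp v (p.support_bypass_subset_support hv') hv
  simpa using (hG.eq_snd_of_adj_start hq hadj (Walk.end_mem_support _)).symm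

lemma psdStep_subset (B : Set V) : psdStep G B ⊆ B ∪ {w | ∃ v ∈ B, G.Adj v w} := by
  rintro w (hw | ⟨v, hv, -, hadj, -⟩)
  exacts [Or.inl hw, Or.inr ⟨v, hv, hadj⟩]

lemma IsAcyclic.psdStep_eq (hG : G.IsAcyclic) (B : Set V) :
    psdStep G B = B ∪ {w | ∃ v ∈ B, G.Adj v w} := by
  refine (psdStep_subset B).antisymm ?_
  rintro w (hw | ⟨v, hv, hadj⟩)
  · exact Or.inl hw
  · by_cases hwB : w ∈ B
    · exact Or.inl hwB
    · exact Or.inr ⟨v, hG.psdForces_iff.2 ⟨hv, hwB, hadj⟩⟩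

lemma iterate_psdStep_subset (S : Set V) (t : ℕ) :
    (psdStep G)^[t] S ⊆ {x | ∃ s ∈ S, G.dist s x ≤ t} := by
  induction t with
  | zero => exact fun x hx => ⟨x, hx, by simp⟩
  | succ t ih =>
    rw [Function.iterate_succ_apply']
    refine (psdStep_subset _).trans ?_
    rintro x (hx | ⟨v, hv, hadj⟩)
    · obtain ⟨s, hs, hd⟩ := ih hx
      exact ⟨s, hs, by omega⟩
    · obtain ⟨s, hs, hd⟩ := ih hv
      exact ⟨s, hs, (dist_le_dist_add_one_of_adj hadj).trans (by omega)⟩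

lemma IsTree.iterate_psdStep_singleton (hG : G.IsTree) (r : V) (t : ℕ) :
    (psdStep G)^[t] {r} = {x | G.dist r x ≤ t} := by
  induction t with
  | zero => ext x; simp [hG.connected.dist_eq_zero_iff, eq_comm]
  | succ t ih =>
    rw [Function.iterate_succ_apply', ih, hG.isAcyclic.psdStep_eq]
    ext x
    simp only [Set.mem_union, Set.mem_ofPred_eq]
    refine ⟨?_, fun hx => ?_⟩
    · rintro (hx | ⟨v, hv, hadj⟩)
      exacts [by omega, (dist_le_dist_add_one_of_adj hadj).trans (by omega)]
    · rcases Nat.lt_or_ge (G.dist r x) (t + 1) with hlt | hge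
      · exact Or.inl (by omega)
      · obtain ⟨v, hadj, hv⟩ := exists_adj_dist_eq_of_dist_eq_add_one (le_antisymm hx hge)
        exact Or.inr ⟨v, hv.le, hadj.symm⟩

section Finite

variable [Fintype V]

lemma card_filter_dist_le_succ (u : V) (t : ℕ) :
    #{v | G.dist u v ≤ t + 1} = #{v | G.dist u v ≤ t} + #{v | G.dist u v = t + 1} := by
  classical
  rw [← card_union_of_disjoint (disjoint_filter.2 fun v _ h => by omega), ← filter_or]
  congr 1
  exact filter_congr fun v _ => by omega

lemma Connected.card_filter_dist_le_zero (hc : G.Connected) (u : V) :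
    #{v | G.dist u v ≤ 0} = 1 :=
  card_eq_one.2 ⟨u, by ext; simp [hc.dist_eq_zero_iff, eq_comm]⟩

variable [DecidableRel G.Adj]

lemma IsAcyclic.card_neighborFinset_filter_dist_eq (hG : G.IsAcyclic) {d : ℕ}
    (hv : G.dist u v = d + 1) : #{w ∈ G.neighborFinset v | G.dist u w = d} = 1 := by
  obtain ⟨w₀, hadj₀, hd₀⟩ := exists_adj_dist_eq_of_dist_eq_add_one hv
  obtain ⟨p, hp⟩ := exists_walk_of_dist_ne_zero (G := G) (u := u) (v := v) (by omega)
  refine card_eq_one.2 ⟨w₀, eq_singleton_iff_unique_mem.2 ⟨by simp [hadj₀, hd₀], fun w hw => ?_⟩⟩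
  rw [mem_filter, mem_neighborFinset] at hw
  rw [hG.eq_penultimate_of_adj_of_dist_lt hp hw.1 (by omega),
    hG.eq_penultimate_of_adj_of_dist_lt hp hadj₀ (by omega)]

lemma IsTree.card_neighborFinset_filter_dist_add_two_add_one (hG : G.IsTree) {d : ℕ}
    (hv : G.dist u v = d + 1) :
    #{w ∈ G.neighborFinset v | G.dist u w = d + 2} + 1 = G.degree v := by
  rw [← card_neighborFinset_eq_degree,
    ← card_filter_add_card_filter_not (s := G.neighborFinset v) (fun w => G.dist u w = d + 2),
    ← hG.isAcyclic.card_neighborFinset_filter_dist_eq hv]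
  congr 2
  refine filter_congr fun w hw => ?_
  have := hG.dist_eq_dist_add_one_of_adj u ((G.mem_neighborFinset v w).1 hw)
  omega

lemma card_filter_dist_eq_add_two_le {Δ : ℕ} (hΔ : ∀ x, G.degree x ≤ Δ) (u : V) (j : ℕ) :
    #{v | G.dist u v = j + 2} ≤ (Δ - 1) * #{v | G.dist u v = j + 1} := by
  classical
  have key := card_mul_le_card_mul (s := {v | G.dist u v = j + 2})
    (t := {v | G.dist u v = j + 1}) G.Adj (m := 1) (n := Δ - 1) ?_ ?_
  · simpa [mul_comm] using key
  · intro a ha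
    obtain ⟨w, hadj, hw⟩ := exists_adj_dist_eq_of_dist_eq_add_one (mem_filter.1 ha).2
    exact card_pos.2 ⟨w, by simp [mem_bipartiteAbove, hadj, hw]⟩
  · intro b hb
    obtain ⟨c, hadj, hc⟩ := exists_adj_dist_eq_of_dist_eq_add_one (mem_filter.1 hb).2
    calc #(bipartiteBelow G.Adj _ b) ≤ #((G.neighborFinset b).erase c) := by
          refine card_le_card fun a ha => ?_
          simp only [mem_bipartiteBelow, mem_filter, mem_univ, true_and] at ha
          simp only [mem_erase, mem_neighborFinset]
          exact ⟨by rintro rfl; omega, ha.2.symm⟩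
      _ = G.degree b - 1 := card_erase_of_mem (by simpa)
      _ ≤ Δ - 1 := Nat.sub_le_sub_right (hΔ b) 1

lemma card_filter_dist_eq_succ_le {Δ : ℕ} (hΔ : ∀ x, G.degree x ≤ Δ) (u : V) (j : ℕ) :
    #{v | G.dist u v = j + 1} ≤ Δ * (Δ - 1) ^ j := by
  induction j with
  | zero =>
    rw [zero_add, pow_zero, mul_one]
    exact (card_le_card fun v hv => by simpa using hv).trans
      ((G.card_neighborFinset_eq_degree u).trans_le (hΔ u))
  | succ j ih =>
    calc _ ≤ (Δ - 1) * #{v | G.dist u v = j + 1} := card_filter_dist_eq_add_two_le hΔ u j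
      _ ≤ (Δ - 1) * (Δ * (Δ - 1) ^ j) := Nat.mul_le_mul_left _ ih
      _ = Δ * (Δ - 1) ^ (j + 1) := by ring

lemma Connected.card_filter_dist_le_add_two_le (hc : G.Connected) (hΔ : ∀ x, G.degree x ≤ 3)
    (u : V) (t : ℕ) : #{v | G.dist u v ≤ t} + 2 ≤ 3 * 2 ^ t := by
  induction t with
  | zero => simp [hc.card_filter_dist_le_zero]
  | succ t ih =>
    have := card_filter_dist_eq_succ_le hΔ u t
    rw [card_filter_dist_le_succ, pow_succ]
    norm_num at this
    omega

lemma IsTree.card_filter_dist_eq_two_pow (hG : G.IsTree) {r : V} {h : ℕ}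
    (hroot : G.degree r = 2) (hdeg : ∀ v, v ≠ r → G.dist r v < h → G.degree v = 3) :
    ∀ d ≤ h, #{v | G.dist r v = d} = 2 ^ d := by
  intro d
  induction d with
  | zero =>
    exact fun _ => card_eq_one.2 ⟨r, by ext; simp [hG.connected.dist_eq_zero_iff, eq_comm]⟩
  | succ d ih =>
    intro hd
    -- double counting the edges between levels `d + 1` and `d`
    have key := card_mul_eq_card_mul (s := {v | G.dist r v = d + 1}) (t := {v | G.dist r v = d})
      G.Adj (m := 1) (n := 2) ?_ ?_
    · rw [mul_one] at key
      rw [key, ih (by omega), pow_succ]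
    · intro a ha
      rw [← hG.isAcyclic.card_neighborFinset_filter_dist_eq (mem_filter.1 ha).2]
      congr 1
      ext; simp [mem_bipartiteAbove, and_comm]
    · intro b hb
      have hb := (mem_filter.1 hb).2
      rcases d with _ | d
      · obtain rfl : r = b := hG.connected.dist_eq_zero_iff.1 hb
        rw [← hroot, ← card_neighborFinset_eq_degree]
        congr 1
        ext; simp [mem_bipartiteBelow, adj_comm]
      · have hbr : b ≠ r := by rintro rfl; simp at hb
        have := hG.card_neighborFinset_filter_dist_add_two_add_one hb
        rw [hdeg b hbr (by omega)] at this
        rw [← show #{w ∈ G.neighborFinset b | G.dist r w = d + 2} = 2 by omega]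
        congr 1
        ext; simp [mem_bipartiteBelow, adj_comm, and_comm]

lemma IsTree.card_add_one_eq_two_pow (hG : G.IsTree) {r : V} {h : ℕ}
    (hroot : G.degree r = 2) (hdeg : ∀ v, v ≠ r → G.dist r v < h → G.degree v = 3)
    (hecc : ∀ v, G.dist r v ≤ h) : Fintype.card V + 1 = 2 ^ (h + 1) := by
  have hball : ∀ d ≤ h, #{v | G.dist r v ≤ d} + 1 = 2 ^ (d + 1) := by
    intro d
    induction d with
    | zero => simp [hG.connected.card_filter_dist_le_zero]
    | succ d ih =>
      intro hd
      rw [card_filter_dist_le_succ, hG.card_filter_dist_eq_two_pow hroot hdeg _ hd, pow_succ,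
        pow_succ]
      have := ih (by omega)
      omega
  rw [← hball h le_rfl, ← card_univ]
  congr 2
  exact (filter_true_of_mem fun v _ => hecc v).symm

lemma Connected.card_add_two_mul_card_le (hc : G.Connected) (hΔ : ∀ x, G.degree x ≤ 3)
    {S : Finset V} {t : ℕ} (hS : (psdStep G)^[t] ↑S = Set.univ) :
    Fintype.card V + 2 * #S ≤ 3 * 2 ^ t * #S := by
  classical
  have hcover : (univ : Finset V) ⊆ S.biUnion fun s => {v | G.dist s v ≤ t} := by
    intro x _
    obtain ⟨s, hs, hd⟩ := iterate_psdStep_subset (G := G) (↑S) t (hS ▸ Set.mem_univ x)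
    exact mem_biUnion.2 ⟨s, hs, by simpa using hd⟩
  calc Fintype.card V + 2 * #S
      ≤ ∑ s ∈ S, #{v | G.dist s v ≤ t} + ∑ s ∈ S, 2 := by
        rw [sum_const, smul_eq_mul, mul_comm, ← card_univ]
        exact Nat.add_le_add_right ((card_le_card hcover).trans card_biUnion_le) _
    _ = ∑ s ∈ S, (#{v | G.dist s v ≤ t} + 2) := sum_add_distrib.symm
    _ ≤ ∑ s ∈ S, 3 * 2 ^ t := sum_le_sum fun s _ => hc.card_filter_dist_le_add_two_le hΔ s t
    _ = 3 * 2 ^ t * #S := by rw [sum_const, smul_eq_mul, mul_comm]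

lemma Connected.add_one_le_card_add_of_iterate_psdStep_eq_univ (hc : G.Connected)
    (hΔ : ∀ x, G.degree x ≤ 3) {h : ℕ} (hV : Fintype.card V + 1 = 2 ^ (h + 1))
    {S : Finset V} {t : ℕ} (hS : (psdStep G)^[t] ↑S = Set.univ) : h + 1 ≤ #S + t := by
  by_contra! hlt
  have hcount := hc.card_add_two_mul_card_le hΔ hS
  have hS₀ : 1 ≤ #S := by
    by_contra! h0
    have : 2 ≤ 2 ^ (h + 1) := Nat.le_self_pow (by omega) 2
    rw [Nat.lt_one_iff.1 h0] at hcount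
    omega
  have hpow : #S * 2 ^ t ≤ 2 ^ (h - 1) :=
    calc #S * 2 ^ t ≤ 2 ^ (#S - 1) * 2 ^ t :=
          Nat.mul_le_mul_right _ (by have := Nat.lt_two_pow_self (n := #S - 1); omega)
      _ = 2 ^ (#S - 1 + t) := (pow_add 2 _ _).symm
      _ ≤ 2 ^ (h - 1) := Nat.pow_le_pow_right (by omega) (by omega)
  have hh : 2 ^ (h + 1) = 4 * 2 ^ (h - 1) := by
    rw [show h + 1 = (h - 1) + 2 by omega, pow_add]
    ring
  have : 3 * 2 ^ t * #S = 3 * (#S * 2 ^ t) := by ring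
  omega

end Finite

end SimpleGraph

lemma psdTh_eq_of_forall_le {V : Type*} [Fintype V] {G : SimpleGraph V} {m : ℕ}
    (hle : ∀ (S : Finset V) t, (psdStep G)^[t] ↑S = Set.univ → m ≤ #S + t)
    {S₀ : Finset V} {t₀ : ℕ} (h₀ : (psdStep G)^[t₀] ↑S₀ = Set.univ) (hm : #S₀ + t₀ ≤ m) :
    psdTh G = m := by
  have hmem : #S₀ + psdPt G ↑S₀ ∈
      {k | ∃ S : Finset V, IsPSDForcingSet G ↑S ∧ k = S.card + psdPt G ↑S} := ⟨S₀, ⟨t₀, h₀⟩, rfl⟩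
  refine le_antisymm ((Nat.sInf_le hmem).trans ?_) (le_csInf ⟨_, hmem⟩ ?_)
  · have : psdPt G ↑S₀ ≤ t₀ := Nat.sInf_le h₀
    omega
  · rintro _ ⟨S, hS, rfl⟩
    exact hle S _ (Nat.sInf_mem hS)

theorem stmt_14 {V : Type*} [Fintype V] (T : SimpleGraph V) (hT : T.IsTree)
    (r : V) (h : ℕ)
    (hroot : (T.neighborSet r).ncard = 2)
    (hecc : ∀ v, T.dist v r ≤ h)
    (hdeg : ∀ v, v ≠ r →
      (T.dist v r < h → (T.neighborSet v).ncard = 3) ∧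
      (T.dist v r = h → (T.neighborSet v).ncard = 1)) :
    psdTh T = h + 1 := by
  classical
  have hncard (v : V) : (T.neighborSet v).ncard = T.degree v := by
    rw [← Nat.card_coe_set_eq, Nat.card_eq_fintype_card, card_neighborSet_eq_degree]
  simp only [hncard, T.dist_comm (v := r)] at hroot hecc hdeg
  have hΔ (v : V) : T.degree v ≤ 3 := by
    by_cases hv : v = r
    · subst hv
      omega
    · rcases (hecc v).lt_or_eq with hlt | heq
      exacts [((hdeg v hv).1 hlt).le, ((hdeg v hv).2 heq).le.trans (by norm_num)]
  have hV := hT.card_add_one_eq_two_pow hroot (fun v hv => (hdeg v hv).1) hecc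
  refine psdTh_eq_of_forall_le
    (fun S t hS => hT.connected.add_one_le_card_add_of_iterate_psdStep_eq_univ hΔ hV hS)
    (S₀ := {r}) (t₀ := h) ?_ (by simp [add_comm])
  rw [coe_singleton, hT.iterate_psdStep_singleton]
  exact Set.eq_univ_of_forall hecc
end
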